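/- arXiv:1901.07048 — 8 statements merged into one kernel-verified Lean document; each statement's English description precedes it below -/
import Mathlib

section
/- Let p be a prime and L a finite group acting by automorphisms on a finite abelian group M. Let N be an L-invariant subgroup of M such that the quotient M/N is a p-group and L acts trivially on M/N, i.e., (l • m) * m⁻¹ ∈ N for all l ∈ L and m ∈ M. Suppose T is a Sylow p-subgroup of L and every element of M can be written as n * c with n ∈ N and c ∈ M fixed by every element of T. Then every element of M can be written as n * c with n ∈ N and c ∈ M fixed by every element of L. -/
/-- If a finite group `L` acts by automorphisms on a finite abelian group `M`,
`N` is an `L`-invariant subgroup with `M/N` a `p`-group on which `L` acts trivially,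
and `M = N · C_M(T)` for a Sylow `p`-subgroup `T` of `L`, then `M = N · C_M(L)`. -/
theorem norm_map_lemma
    (p : ℕ) (hp : p.Prime)
    (L M : Type*) [Group L] [Finite L] [CommGroup M] [Finite M]
    [MulDistribMulAction L M]
    (N : Subgroup M)
    (hNinv : ∀ (l : L) (n : M), n ∈ N → l • n ∈ N)
    (hquotP : ∀ m : M, ∃ k : ℕ, m ^ (p ^ k) ∈ N)
    (htriv : ∀ (l : L) (m : M), (l • m) * m⁻¹ ∈ N)
    (T : Sylow p L)
    (hT : ∀ m : M, ∃ n ∈ N, ∃ c : M, (∀ t ∈ (T : Subgroup L), t • c = c) ∧ m = n * c) :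
    ∀ m : M, ∃ n ∈ N, ∃ c : M, (∀ l : L, l • c = c) ∧ m = n * c := by
  intro m
  haveI : Fact p.Prime := ⟨hp⟩
  obtain ⟨n, hn, c, hc, rfl⟩ := hT m
  -- the function on cosets
  set Q := L ⧸ (T : Subgroup L) with hQ
  haveI : Fintype Q := Fintype.ofFinite Q
  have hF : ∀ a b : L, (a : Q) = (b : Q) → a • c = b • c := by
    intro a b hab
    obtain ⟨t, ht, h⟩ : ∃ t ∈ (T : Subgroup L), b = a * t := by
      rw [QuotientGroup.eq] at hab
      exact ⟨a⁻¹ * b, hab, by group⟩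
    rw [h, mul_smul, hc t ht]
  let F : Q → M := Quotient.lift (fun l : L => l • c) (fun a b hab => hF a b (Quotient.sound hab))
  have hFmk : ∀ l : L, F (l : Q) = l • c := fun l => rfl
  set d : M := ∏ x : Q, F x with hd
  -- d is L-fixed
  have hdfix : ∀ g : L, g • d = d := by
    intro g
    have : g • d = ∏ x : Q, F (g • x) := by
      rw [hd, Finset.smul_prod']
      refine Finset.prod_congr rfl fun x _ => ?_
      induction x using QuotientGroup.induction_on with
      | H l =>
        show g • F (l : Q) = F ((g * l : L) : Q)
        rw [hFmk, hFmk, mul_smul]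
    rw [this]
    exact Equiv.prod_comp (MulAction.toPerm g) F
  -- pass to the quotient M ⧸ N
  let π : M →* M ⧸ N := QuotientGroup.mk' N
  have hπ : ∀ x : Q, π (F x) = π c := by
    intro x
    induction x using QuotientGroup.induction_on with
    | H l =>
      rw [hFmk]
      show ((l • c : M) : M ⧸ N) = ((c : M) : M ⧸ N)
      rw [QuotientGroup.eq]
      have h := N.inv_mem (htriv l c)
      rw [mul_inv_rev, inv_inv] at h
      rwa [mul_comm] at h
  have hπd : π d = (π c) ^ Fintype.card Q := by
    rw [hd, map_prod]
    rw [Finset.prod_congr rfl fun x _ => hπ x, Finset.prod_const, Finset.card_univ]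
  -- card Q is coprime to the order of π c
  have hcop : (Fintype.card Q).Coprime (orderOf (π c)) := by
    obtain ⟨k, hk⟩ := hquotP c
    have horder : orderOf (π c) ∣ p ^ k := by
      apply orderOf_dvd_of_pow_eq_one
      rw [← map_pow]
      show ((c ^ p ^ k : M) : M ⧸ N) = 1
      exact (QuotientGroup.eq_one_iff _).2 hk
    have hcard : Fintype.card Q = (T : Subgroup L).index := by
      rw [Subgroup.index, Nat.card_eq_fintype_card]
    have hnd : ¬ p ∣ Fintype.card Q := by
      rw [hcard]; exact T.not_dvd_index
    exact Nat.Coprime.coprime_dvd_right horder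
      (Nat.Coprime.pow_right k (((Nat.Prime.coprime_iff_not_dvd hp).2 hnd).symm))
  obtain ⟨u, hu⟩ := exists_pow_eq_self_of_coprime hcop
  -- c / d^u ∈ N
  have hmem : c * (d ^ u)⁻¹ ∈ N := by
    have : π (d ^ u) = π c := by rw [map_pow, hπd, hu]
    have h2 : π (c * (d ^ u)⁻¹) = 1 := by
      rw [map_mul, map_inv, this, mul_inv_cancel]
    exact (QuotientGroup.eq_one_iff _).1 h2
  refine ⟨n * (c * (d ^ u)⁻¹), N.mul_mem hn hmem, d ^ u, ?_, by group⟩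
  intro l
  show (MulDistribMulAction.toMonoidHom M l) (d ^ u) = d ^ u
  rw [map_pow]
  show (l • d) ^ u = d ^ u
  rw [hdfix]
end

section
/- Let p be a prime and L a finite group possessing a normal p-subgroup K whose centralizer in L is contained in K (this condition is equivalent to the generalized Fitting subgroup F*(L) being equal to O_p(L)). If a is a nontrivial automorphism of L of p-power order that fixes every element of some Sylow p-subgroup P of L, then there exists z ∈ P commuting with every element of P (i.e., z ∈ Z(P)) such that a is conjugation by z: a(x) = z * x * z⁻¹ for all x ∈ L. -/
/-- If `L` has a normal `p`-subgroup `K` with `C_L(K) ≤ K` (equivalently `F*(L) = O_p(L)`)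
and `a` is a nontrivial automorphism of `L` of `p`-power order fixing every element of a
Sylow `p`-subgroup `P`, then `a` is conjugation by an element of `Z(P)`. -/
theorem automorphism_is_conj_by_center_element
    (p : ℕ) (hp : p.Prime)
    (L : Type*) [Group L] [Finite L]
    (K : Subgroup L) (hKn : K.Normal) (hKp : IsPGroup p K)
    (hcent : Subgroup.centralizer (K : Set L) ≤ K)
    (a : MulAut L) (hane : a ≠ 1) (ha : ∃ n : ℕ, orderOf a = p ^ n)
    (P : Sylow p L) (hfix : ∀ x ∈ (P : Subgroup L), a x = x) :
    ∃ z ∈ (P : Subgroup L), (∀ w ∈ (P : Subgroup L), z * w = w * z) ∧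
      ∀ x : L, a x = z * x * z⁻¹ := by
  classical
  haveI : Fact p.Prime := ⟨hp⟩
  set C := Subgroup.centralizer (K : Set L) with hCdef
  -- K is contained in P
  have hKP : K ≤ (P : Subgroup L) := by
    obtain ⟨Q, hKQ⟩ := hKp.exists_le_sylow
    obtain ⟨g, hg⟩ := MulAction.exists_smul_eq L Q P
    intro x hx
    rw [← hg]
    show x ∈ ((g • Q : Sylow p L) : Subgroup L)
    rw [Sylow.coe_subgroup_smul, Subgroup.mem_pointwise_smul_iff_inv_smul_mem]
    have : g⁻¹ * x * g ∈ K := by simpa using hKn.conj_mem x hx g⁻¹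
    simpa [MulAut.smul_def] using hKQ this
  -- the cocycle values lie in C
  have hmemC : ∀ x : L, a x * x⁻¹ ∈ C := by
    intro x
    rw [hCdef, Subgroup.mem_centralizer_iff]
    intro k hk
    have h1 : a k = k := hfix k (hKP hk)
    have hk' : x⁻¹ * k * x ∈ K := by simpa using hKn.conj_mem k hk x⁻¹
    have h2 : a (x⁻¹ * k * x) = x⁻¹ * k * x := hfix _ (hKP hk')
    have h3 : (a x)⁻¹ * k * a x = x⁻¹ * k * x := by
      rw [map_mul, map_mul, map_inv, h1] at h2
      exact h2
    have h5 := congrArg (fun t => a x * t * x⁻¹) h3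
    simpa [mul_assoc] using h5
  -- C is abelian
  have hcomm : ∀ c d : ↥C, c * d = d * c := by
    rintro ⟨c, hc⟩ ⟨d, hd⟩
    apply Subtype.ext
    show c * d = d * c
    exact Subgroup.mem_centralizer_iff.mp hd c (hcent hc)
  letI : CommGroup ↥C := { (inferInstance : Group ↥C) with mul_comm := hcomm }
  -- conjugation action on C
  have hconjmem : ∀ (x : L) (c : L), c ∈ C → x * c * x⁻¹ ∈ C := by
    intro x c hc
    rw [hCdef, Subgroup.mem_centralizer_iff]
    intro k hk
    have hk' : x⁻¹ * k * x ∈ K := by simpa using hKn.conj_mem k hk x⁻¹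
    have h3 := Subgroup.mem_centralizer_iff.mp hc _ hk'
    have h5 := congrArg (fun t => x * t * x⁻¹) h3
    simpa [mul_assoc] using h5
  let φ : L → (↥C →* ↥C) := fun x =>
    { toFun := fun c => ⟨x * c * x⁻¹, hconjmem x c c.2⟩
      map_one' := by apply Subtype.ext; simp
      map_mul' := by
        intro c d
        apply Subtype.ext
        show x * (↑c * ↑d) * x⁻¹ = (x * ↑c * x⁻¹) * (x * ↑d * x⁻¹)
        group }
  let zc : L → ↥C := fun x => ⟨a x * x⁻¹, hmemC x⟩
  have hzc1 : ∀ u ∈ (P : Subgroup L), zc u = 1 := by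
    intro u hu
    apply Subtype.ext
    show a u * u⁻¹ = 1
    rw [hfix u hu, mul_inv_cancel]
  have hcoc : ∀ x y : L, zc (x * y) = zc x * φ x (zc y) := by
    intro x y
    apply Subtype.ext
    show a (x * y) * (x * y)⁻¹ = (a x * x⁻¹) * (x * (a y * y⁻¹) * x⁻¹)
    rw [map_mul]
    group
  have hlift : ∀ x y : L, @Setoid.r L (QuotientGroup.leftRel (P : Subgroup L)) x y → zc x = zc y := by
    intro x y hxy
    rw [QuotientGroup.leftRel_apply] at hxy
    have : zc (x * (x⁻¹ * y)) = zc x * φ x (zc (x⁻¹ * y)) := hcoc x (x⁻¹ * y)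
    rw [hzc1 _ hxy, map_one, mul_one] at this
    rw [← this, mul_inv_cancel_left]
  let zbar : L ⧸ (P : Subgroup L) → ↥C := fun q => Quotient.liftOn' q zc hlift
  haveI : Fintype (L ⧸ (P : Subgroup L)) := Fintype.ofFinite _
  haveI : Fintype ↥C := Fintype.ofFinite _
  set m := Fintype.card (L ⧸ (P : Subgroup L)) with hm
  set S := ∏ q : L ⧸ (P : Subgroup L), zbar q with hS
  have hkey : ∀ x : L, zc x ^ m = S * (φ x S)⁻¹ := by
    intro x
    have e1 : ∀ q, zbar (x • q) = zc x * φ x (zbar q) := by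
      intro q
      refine Quotient.inductionOn q (fun y => ?_)
      show zbar (x • QuotientGroup.mk y) = zc x * φ x (zbar (QuotientGroup.mk y))
      rw [MulAction.Quotient.smul_mk]
      exact hcoc x y
    have e2 : zc x ^ m * φ x S = S := by
      calc zc x ^ m * φ x S = ∏ q : L ⧸ (P : Subgroup L), (zc x * φ x (zbar q)) := by
            rw [Finset.prod_mul_distrib, Finset.prod_const, Finset.card_univ, map_prod]
        _ = ∏ q : L ⧸ (P : Subgroup L), zbar (x • q) :=
            Finset.prod_congr rfl (fun q _ => (e1 q).symm)
        _ = S := by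
            have := Equiv.prod_comp (MulAction.toPerm x : Equiv.Perm (L ⧸ (P : Subgroup L))) zbar
            simpa [MulAction.toPerm_apply] using this
    exact eq_mul_inv_of_mul_eq e2
  -- coprimality
  set e := Fintype.card ↥C with he
  have hCp : IsPGroup p ↥C := hKp.to_le hcent
  obtain ⟨k, hk⟩ := IsPGroup.iff_card.mp hCp
  have hpm : ¬ p ∣ m := by
    have h1 : ¬ p ∣ (P : Subgroup L).index := P.not_dvd_index
    have h2 : (P : Subgroup L).index = m := by
      rw [hm, Subgroup.index, Nat.card_eq_fintype_card]
    rwa [h2] at h1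
  have hme : Nat.Coprime m e := by
    have h1 : Nat.Coprime p m := (hp.coprime_iff_not_dvd).mpr hpm
    have h2 : Nat.Coprime (p ^ k) m := h1.pow_left k
    have : e = p ^ k := by rw [he, ← Nat.card_eq_fintype_card, hk]
    rw [this]
    exact h2.symm
  have hepos : 0 < e := Fintype.card_pos
  set m' := m ^ (e.totient - 1) with hm'
  have hmm' : m * m' ≡ 1 [MOD e] := by
    have ht : 0 < e.totient := Nat.totient_pos.mpr hepos
    have : m * m' = m ^ e.totient := by
      rw [hm', ← pow_succ']
      congr 1
      omega
    rw [this]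
    exact Nat.ModEq.pow_totient hme
  have hpow : ∀ c : ↥C, c ^ (m * m') = c := by
    intro c
    have hd : orderOf c ∣ e := orderOf_dvd_card
    have : m * m' ≡ 1 [MOD orderOf c] := hmm'.of_dvd hd
    calc c ^ (m * m') = c ^ 1 := pow_eq_pow_iff_modEq.mpr this
      _ = c := pow_one c
  set c₀ : ↥C := S ^ m' with hc₀
  have final : ∀ x : L, zc x = c₀ * (φ x c₀)⁻¹ := by
    intro x
    calc zc x = (zc x ^ m) ^ m' := by rw [← pow_mul, hpow]
      _ = (S * (φ x S)⁻¹) ^ m' := by rw [hkey x]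
      _ = S ^ m' * ((φ x S) ^ m')⁻¹ := by rw [mul_pow, inv_pow]
      _ = c₀ * (φ x c₀)⁻¹ := by rw [hc₀, map_pow]
  refine ⟨(c₀ : L), hKP (hcent c₀.2), ?_, ?_⟩
  · intro w hw
    have h1 := final w
    rw [hzc1 w hw] at h1
    have h2 : φ w c₀ = c₀ := (mul_inv_eq_one.mp h1.symm).symm
    have h3 : w * (c₀ : L) * w⁻¹ = (c₀ : L) := congrArg Subtype.val h2
    have := congrArg (fun t => t * w) h3
    simpa [mul_assoc] using this.symm
  · intro x
    have h1 := congrArg Subtype.val (final x)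
    have h2 : (zc x : L) = a x * x⁻¹ := rfl
    have h3 : ((c₀ * (φ x c₀)⁻¹ : ↥C) : L) = (c₀ : L) * (x * (c₀ : L) * x⁻¹)⁻¹ := rfl
    rw [h2, h3] at h1
    have := congrArg (fun t => t * x) h1
    simpa [mul_assoc] using this
end

section
/- Let L be a finite group, p a prime, and Z a subgroup of the center of L that is a p-group. Let g ∈ L be such that the index of the centralizer of g in L is not divisible by p. Then the only L-conjugate of g lying in the coset gZ is g itself; equivalently, for all u ∈ L and z ∈ Z, if u * g * u⁻¹ = g * z then z = 1. -/
/-!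
The elements `a` with `⁅a, g⁆ ∈ Z` form a subgroup `H` containing the centralizer `C` of `g`,
and since `Z` is central, `a ↦ ⁅a, g⁆` is a homomorphism `H →* Z` with kernel `C`.
So `[H : C]` is the order of a subgroup of the `p`-group `Z`, and it divides the index of `C`,
which is prime to `p`; hence `H = C`. A conjugate `u g u⁻¹ = g z` gives `⁅u, g⁆ = z`,
so `u ∈ H = C` and `z = 1`.
-/

open Subgroup
open scoped commutatorElement

section

variable {G : Type*} [Group G]

theorem commutatorElement_mul_left_of_mem_center {a b g : G} (hb : ⁅b, g⁆ ∈ center G) :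
    ⁅a * b, g⁆ = ⁅a, g⁆ * ⁅b, g⁆ := by
  calc ⁅a * b, g⁆ = a * ⁅b, g⁆ * (g * a⁻¹ * g⁻¹) := by simp only [commutatorElement_def]; group
    _ = ⁅b, g⁆ * ⁅a, g⁆ := by
        rw [mem_center_iff.mp hb a]; simp only [commutatorElement_def]; group
    _ = ⁅a, g⁆ * ⁅b, g⁆ := (mem_center_iff.mp hb _).symm

theorem commutatorElement_inv_left_of_mem_center {a g : G} (ha : ⁅a, g⁆ ∈ center G) :
    ⁅a⁻¹, g⁆ = ⁅a, g⁆⁻¹ := by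
  rw [eq_inv_iff_mul_eq_one, ← commutatorElement_mul_left_of_mem_center ha, inv_mul_cancel,
    commutatorElement_one_left]

section CentralizerModulo

variable (Z : Subgroup G)

/-- The preimage of the centralizer of `gZ` in `G ⧸ Z`. -/
def centralizerModulo (hZ : Z ≤ center G) (g : G) : Subgroup G where
  carrier := {a | ⁅a, g⁆ ∈ Z}
  one_mem' := by simp [Z.one_mem]
  mul_mem' {a b} ha hb := by
    change ⁅a * b, g⁆ ∈ Z
    rw [commutatorElement_mul_left_of_mem_center (hZ hb)]
    exact Z.mul_mem ha hb
  inv_mem' {a} ha := by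
    change ⁅a⁻¹, g⁆ ∈ Z
    rw [commutatorElement_inv_left_of_mem_center (hZ ha)]
    exact Z.inv_mem ha

variable (hZ : Z ≤ center G) (g : G)

variable {Z hZ g} in
theorem mem_centralizerModulo {a : G} : a ∈ centralizerModulo Z hZ g ↔ ⁅a, g⁆ ∈ Z := Iff.rfl

theorem centralizer_le_centralizerModulo : centralizer {g} ≤ centralizerModulo Z hZ g := by
  intro a ha
  rw [mem_centralizerModulo, commutatorElement_eq_one_iff_mul_comm.mpr
    (mem_centralizer_singleton_iff.mp ha)]
  exact Z.one_mem

def commutatorHom : centralizerModulo Z hZ g →* Z where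
  toFun a := ⟨⁅(a : G), g⁆, a.2⟩
  map_one' := Subtype.ext (commutatorElement_one_left g)
  map_mul' _ b := Subtype.ext (commutatorElement_mul_left_of_mem_center (hZ b.2))

theorem ker_commutatorHom :
    (commutatorHom Z hZ g).ker = (centralizer {g}).subgroupOf (centralizerModulo Z hZ g) := by
  ext a
  rw [MonoidHom.mem_ker, mem_subgroupOf, mem_centralizer_singleton_iff,
    ← commutatorElement_eq_one_iff_mul_comm, ← Subtype.val_inj]
  rfl

theorem relIndex_centralizer_eq_card_range_commutatorHom :
    (centralizer {g}).relIndex (centralizerModulo Z hZ g) =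
      Nat.card (commutatorHom Z hZ g).range := by
  rw [← index_ker, ker_commutatorHom, relIndex]

theorem centralizerModulo_le_centralizer {p : ℕ} [Fact p.Prime] (hZp : IsPGroup p Z)
    (hind : ¬ p ∣ (centralizer {g}).index) : centralizerModulo Z hZ g ≤ centralizer {g} := by
  have hdvd := relIndex_dvd_index_of_le (centralizer_le_centralizerModulo Z hZ g)
  rw [← relIndex_eq_one]
  rw [relIndex_centralizer_eq_card_range_commutatorHom] at hdvd ⊢
  exact ((hZp.to_subgroup _).card_eq_or_dvd).resolve_right fun hp => hind (hp.trans hdvd)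

end CentralizerModulo

end

theorem conj_in_central_coset_eq_general
    (p : ℕ) (hp : p.Prime)
    (L : Type*) [Group L]
    (Z : Subgroup L) (hZc : Z ≤ Subgroup.center L) (hZp : IsPGroup p Z)
    (g : L) (hind : ¬ p ∣ (Subgroup.centralizer {g}).index) :
    ∀ u z : L, z ∈ Z → u * g * u⁻¹ = g * z → z = 1 := by
  have : Fact p.Prime := ⟨hp⟩
  intro u z hz hconj
  have hcomm : ⁅u, g⁆ = z := by
    rw [commutatorElement_def, hconj, mul_assoc, ← (mem_center_iff.mp (hZc hz) g⁻¹),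
      mul_inv_cancel_left]
  have hu : u ∈ centralizer {g} :=
    centralizerModulo_le_centralizer Z hZc g hZp hind (mem_centralizerModulo.mpr (hcomm ▸ hz))
  rw [← hcomm, commutatorElement_eq_one_iff_mul_comm]
  exact mem_centralizer_singleton_iff.mp hu

/-- If `Z` is a central `p`-subgroup of a finite group `L` and `g ∈ L` has centralizer of
index prime to `p`, then the only `L`-conjugate of `g` in the coset `gZ` is `g` itself. -/
theorem conj_in_central_coset_eq
    (p : ℕ) (hp : p.Prime)
    (L : Type*) [Group L] [Finite L]
    (Z : Subgroup L) (hZc : Z ≤ Subgroup.center L) (hZp : IsPGroup p Z)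
    (g : L) (hind : ¬ p ∣ (Subgroup.centralizer {g}).index) :
    ∀ u z : L, z ∈ Z → u * g * u⁻¹ = g * z → z = 1 :=
  conj_in_central_coset_eq_general p hp L Z hZc hZp g hind
end

section
/- Let p be a prime and G a finite group with Sylow p-subgroup S. If a ∈ S is weakly closed in S with respect to G (every G-conjugate of a that lies in S equals a), then for every natural number n the element aⁿ is also weakly closed in S with respect to G. -/
private lemma zpowers_isPGroup_of_pow {p : ℕ} {H : Type*} [Group H] {x : H} {k : ℕ}
    (h : x ^ p ^ k = 1) : IsPGroup p (Subgroup.zpowers x) := by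
  intro y
  obtain ⟨m, hm⟩ := Subgroup.mem_zpowers_iff.mp y.2
  refine ⟨k, Subtype.ext ?_⟩
  push_cast
  rw [← hm, ← zpow_natCast (x ^ m), ← zpow_mul, mul_comm, zpow_mul, zpow_natCast, h, one_zpow]

/-- If `a` is weakly closed in a Sylow `p`-subgroup `S` of a finite group `G`, then so is
every power of `a`. -/
theorem pow_weakly_closed
    (p : ℕ) (hp : p.Prime)
    (G : Type*) [Group G] [Finite G]
    (S : Sylow p G) (a : G) (ha : a ∈ (S : Subgroup G))
    (hwc : ∀ g : G, g * a * g⁻¹ ∈ (S : Subgroup G) → g * a * g⁻¹ = a) :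
    ∀ n : ℕ, ∀ g : G, g * a ^ n * g⁻¹ ∈ (S : Subgroup G) → g * a ^ n * g⁻¹ = a ^ n := by
  haveI : Fact p.Prime := ⟨hp⟩
  -- `a` is central in `S`
  have hcen : ∀ s ∈ (S : Subgroup G), s * a = a * s := by
    intro s hs
    have h1 : s * a * s⁻¹ ∈ (S : Subgroup G) := mul_mem (mul_mem hs ha) (inv_mem hs)
    have h2 := hwc s h1
    calc s * a = s * a * s⁻¹ * s := by group
    _ = a * s := by rw [h2]
  intro n g hz
  set z := g * a ^ n * g⁻¹ with hzdef
  set b := g * a * g⁻¹ with hbdef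
  have hbn : b ^ n = z := by rw [hbdef, conj_pow]
  set C := Subgroup.centralizer ({z} : Set G) with hCdef
  -- `a ∈ C`
  have haz : z * a = a * z := hcen z hz
  have haC : a ∈ C := by
    rw [hCdef, Subgroup.mem_centralizer_iff]
    intro h hh
    rw [Set.mem_singleton_iff] at hh
    rw [hh]
    exact haz
  -- `b ∈ C`
  have hbC : b ∈ C := by
    rw [hCdef, Subgroup.mem_centralizer_iff]
    intro h hh
    rw [Set.mem_singleton_iff] at hh
    rw [hh, ← hbn, ← pow_succ, ← pow_succ']
  -- `a` and `b` are `p`-elements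
  obtain ⟨k, hk⟩ := S.2 ⟨a, ha⟩
  have hak : a ^ p ^ k = 1 := by
    have := congrArg (Subtype.val) hk
    simpa using this
  have hbk : b ^ p ^ k = 1 := by
    rw [hbdef, conj_pow, hak, mul_one, mul_inv_cancel]
  have hakC : (⟨a, haC⟩ : C) ^ p ^ k = 1 := by
    rw [Subtype.ext_iff]; push_cast; exact hak
  have hbkC : (⟨b, hbC⟩ : C) ^ p ^ k = 1 := by
    rw [Subtype.ext_iff]; push_cast; exact hbk
  -- Sylow subgroups of `C` containing `a` and `b` respectively
  obtain ⟨Q, hQ⟩ := (zpowers_isPGroup_of_pow hakC).exists_le_sylow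
  obtain ⟨Q', hQ'⟩ := (zpowers_isPGroup_of_pow hbkC).exists_le_sylow
  -- conjugate `Q'` to `Q` inside `C`
  obtain ⟨c, hc⟩ := MulAction.exists_smul_eq C Q' Q
  have hb' : (⟨b, hbC⟩ : C) ∈ (Q' : Subgroup C) := hQ' (Subgroup.mem_zpowers _)
  have hbQ : c * (⟨b, hbC⟩ : C) * c⁻¹ ∈ (Q : Subgroup C) := by
    rw [← hc, Sylow.coe_subgroup_smul]
    have := Subgroup.smul_mem_pointwise_smul _ (MulAut.conj c) _ hb'
    simpa [MulAut.smul_def, MulAut.conj_apply] using this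
  have haQ : (⟨a, haC⟩ : C) ∈ (Q : Subgroup C) := hQ (Subgroup.mem_zpowers _)
  -- map `Q` into `G` and find a Sylow of `G` containing it
  have hQG : IsPGroup p ((Q : Subgroup C).map C.subtype) := Q.2.map _
  obtain ⟨T, hT⟩ := hQG.exists_le_sylow
  obtain ⟨h, hh⟩ := MulAction.exists_smul_eq G S T
  -- membership translation: x ∈ T → h⁻¹ * x * h ∈ S
  have hmem : ∀ x : G, x ∈ (T : Subgroup G) → h⁻¹ * x * h⁻¹⁻¹ ∈ (S : Subgroup G) := by
    intro x hx
    rw [← hh] at hx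
    have := Subgroup.mem_pointwise_smul_iff_inv_smul_mem.mp hx
    simpa [MulAut.smul_def, mul_assoc] using this
  -- a ∈ T
  have haT : a ∈ (T : Subgroup G) := hT ⟨⟨a, haC⟩, haQ, rfl⟩
  have hah : h⁻¹ * a * h⁻¹⁻¹ = a := hwc h⁻¹ (hmem a haT)
  -- c * b * c⁻¹ ∈ T
  have hcbT : (c : G) * b * (c : G)⁻¹ ∈ (T : Subgroup G) :=
    hT ⟨c * (⟨b, hbC⟩ : C) * c⁻¹, hbQ, rfl⟩
  -- c * b * c⁻¹ is a conjugate of a, so conjugating by h⁻¹ lands in S and equals a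
  have hw : (h⁻¹ * ((c : G) * g)) * a * (h⁻¹ * ((c : G) * g))⁻¹
      = h⁻¹ * ((c : G) * b * (c : G)⁻¹) * h⁻¹⁻¹ := by rw [hbdef]; group
  have hkey0 := hmem _ hcbT
  rw [← hw] at hkey0
  have key := hwc _ hkey0
  have key2 : h⁻¹ * ((c : G) * b * (c : G)⁻¹) * h⁻¹⁻¹ = a := by rw [← hw, key]
  -- hence c * b * c⁻¹ = h * a * h⁻¹ = a
  have hcb : (c : G) * b * (c : G)⁻¹ = a := by
    have e1 : (c : G) * b * (c : G)⁻¹ = h * a * h⁻¹ := by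
      conv_rhs => rw [← key2]
      group
    have e2 : h * a * h⁻¹ = a := by
      conv_lhs => rw [← hah]
      group
    rw [e1, e2]
  -- conclude: since c centralizes z, z = c z c⁻¹ = c bⁿ c⁻¹ = aⁿ
  have hcz : (c : G) * z * (c : G)⁻¹ = z := by
    have h0 : z * (c : G) = (c : G) * z :=
      (Subgroup.mem_centralizer_iff.mp c.2) z (Set.mem_singleton z)
    rw [← h0]; group
  have final : (c : G) * z * (c : G)⁻¹ = a ^ n := by
    rw [← hbn, ← conj_pow, hcb]
  rw [← final]
  exact hcz.symm
end

section
/- Let p be a prime, G a finite group with Sylow p-subgroup S, and x ∈ S an element that is weakly closed in S with respect to G (every G-conjugate of x lying in S equals x). Then x is isolated in its centralizer: for every g ∈ G, if the conjugate g * x * g⁻¹ commutes with x, then g * x * g⁻¹ = x. -/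
/-- If `x` is weakly closed in a Sylow `p`-subgroup `S` of a finite group `G`, then `x` is
isolated in its centralizer: any conjugate of `x` commuting with `x` equals `x`. -/
theorem weakly_closed_isolated_in_centralizer
    (p : ℕ) (hp : p.Prime)
    (G : Type*) [Group G] [Finite G]
    (S : Sylow p G) (x : G) (hx : x ∈ (S : Subgroup G))
    (hwc : ∀ g : G, g * x * g⁻¹ ∈ (S : Subgroup G) → g * x * g⁻¹ = x) :
    ∀ g : G, Commute (g * x * g⁻¹) x → g * x * g⁻¹ = x := by
  haveI := Fact.mk hp
  intro g hc
  set y := g * x * g⁻¹ with hy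
  obtain ⟨n, hxn⟩ := S.isPGroup' ⟨x, hx⟩
  have hxn : x ^ p ^ n = 1 := Subtype.ext_iff.mp hxn
  have hyn : y ^ p ^ n = 1 := by
    rw [hy, conj_pow, hxn, mul_one, mul_inv_cancel]
  set H : Subgroup G := Subgroup.closure {x, y} with hH
  have hxH : x ∈ H := Subgroup.subset_closure (Or.inl rfl)
  have hyH : y ∈ H := Subgroup.subset_closure (Or.inr rfl)
  -- all elements of H commute
  have h1 : H ≤ Subgroup.centralizer {x, y} := by
    rw [hH, Subgroup.closure_le]
    rintro w (rfl | rfl) <;> rw [SetLike.mem_coe, Subgroup.mem_centralizer_iff] <;>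
      rintro v (rfl | rfl)
    · rfl
    · exact hc
    · exact hc.symm
    · rfl
  have h2 : H ≤ Subgroup.centralizer (Subgroup.centralizer {x, y}) :=
    Subgroup.closure_le_centralizer_centralizer _
  have comm : ∀ a ∈ H, ∀ b ∈ H, Commute a b := by
    intro a ha b hb
    exact (Subgroup.mem_centralizer_iff.mp (h2 ha) b (h1 hb)).symm
  -- H is a p-group
  have hPH : IsPGroup p H := by
    intro ⟨z, hz⟩
    suffices h : ∃ k : ℕ, z ^ p ^ k = 1 by
      obtain ⟨k, hk⟩ := h
      exact ⟨k, Subtype.ext (by simpa using hk)⟩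
    refine Subgroup.closure_induction ?_ ?_ ?_ ?_ hz
    · rintro w (rfl | rfl)
      · exact ⟨n, hxn⟩
      · exact ⟨n, hyn⟩
    · exact ⟨0, one_pow _⟩
    · rintro a b ha hb ⟨k, hak⟩ ⟨l, hbl⟩
      refine ⟨k + l, ?_⟩
      rw [(comm a ha b hb).mul_pow, pow_add, pow_mul, hak, one_pow, one_mul,
        mul_comm (p ^ k), pow_mul, hbl, one_pow]
    · rintro a _ ⟨k, hak⟩
      exact ⟨k, by rw [inv_pow, hak, inv_one]⟩
  obtain ⟨T, hT⟩ := hPH.exists_le_sylow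
  obtain ⟨k, hk⟩ := MulAction.exists_smul_eq G T S
  have hmem : ∀ w ∈ H, k * w * k⁻¹ ∈ (S : Subgroup G) := by
    intro w hw
    rw [← hk, Sylow.coe_subgroup_smul]
    exact ⟨w, hT hw, rfl⟩
  have hkx : k * x * k⁻¹ = x := hwc k (hmem x hxH)
  have hky : k * y * k⁻¹ = x := by
    have := hmem y hyH
    rw [hy] at this ⊢
    have h' : (k * g) * x * (k * g)⁻¹ ∈ (S : Subgroup G) := by
      rw [mul_inv_rev]; group at this ⊢; exact this
    have := hwc (k * g) h'
    rw [mul_inv_rev] at this; group at this ⊢; exact this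
  calc y = k⁻¹ * (k * y * k⁻¹) * k := by group
  _ = k⁻¹ * (k * x * k⁻¹) * k := by rw [hky, hkx]
  _ = x := by group
end

section
/- Let p be an odd prime and Q a finite quasisimple group (Q equals its own commutator subgroup and the quotient of Q by its center is a simple group) with center Z. Assume that either the order of Z is not divisible by p, or the index in Aut(Q) of the subgroup of inner automorphisms of Q is not divisible by p. Let P be a Sylow p-subgroup of Q and let x ∈ P commute with every element of P. Then there exists y ∈ Q with y * x⁻¹ ∈ Z, such that the order of y is a power of p, and such that every automorphism f of Q satisfying f(x) * x⁻¹ ∈ Z fixes y, i.e., f(y) = y. -/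
/-!
Let `Z = Z(Q)` and `x ^ p ^ N = 1`. If `p ∤ |Z|`, an automorphism preserving the coset `xZ` moves
`x` by a central `p`-element, which must be trivial, so `y = x` works.

Otherwise `p ∤ |Out Q|`. An inner automorphism `conj q` preserving `xZ` fixes `x`: the map
`a ↦ [a, x]` is a homomorphism to `Z` on the preimage of the centralizer of `xZ` in `Q/Z`, and it
kills the Sylow subgroup `P`, so its values have `p'`-order, while `[q, x]` is a `p`-element.
Hence the orbit of `x` under the stabilizer `A` of `xZ` in `Aut Q` has `p'`-size `n`. The orbit
lies in `xZ`, so its elements commute, and their product `π` is an `A`-fixed `p`-element of `xⁿZ`.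
A power `π ^ m` with `n m ≡ 1` modulo the order of `x` is the required `y`.
-/

section

variable {G : Type*} [Group G]

theorem Finset.noncommProd_id_pow_eq_one {s : Finset G} (comm : (s : Set G).Pairwise Commute)
    {n : ℕ} (h : ∀ a ∈ s, a ^ n = 1) : s.noncommProd id comm ^ n = 1 := by
  classical
  induction s using Finset.induction_on with
  | empty => rw [Finset.noncommProd_empty, one_pow]
  | insert a s ha ih =>
    have comm' : (s : Set G).Pairwise Commute := comm.mono (by simp)
    rw [Finset.noncommProd_insert_of_notMem _ _ _ _ ha, id,
      (Finset.noncommProd_commute s id comm' a fun b hb => comm (by simp) (by simp [hb])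
        (ne_of_mem_of_not_mem hb ha).symm).mul_pow,
      h a (by simp), ih comm' fun b hb => h b (by simp [hb]), one_mul]

theorem Finset.apply_noncommProd_id_of_mapsTo {s : Finset G} (comm : (s : Set G).Pairwise Commute)
    (f : MulAut G) (hf : ∀ a ∈ s, f a ∈ s) : f (s.noncommProd id comm) = s.noncommProd id comm := by
  have hmap : s.map f.toEquiv.toEmbedding = s := by
    refine Finset.eq_of_subset_of_card_le (fun b hb => ?_) (by simp)
    obtain ⟨a, ha, rfl⟩ := Finset.mem_map.1 hb
    exact hf a ha
  calc f (s.noncommProd id comm)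
      = (s.map f.toEquiv.toEmbedding).noncommProd id (by rw [hmap]; exact comm) := by
        rw [map_noncommProd]
        simp only [Finset.noncommProd, Finset.map_val, Multiset.map_map]
        rfl
    _ = s.noncommProd id comm := Finset.noncommProd_congr hmap (fun _ _ => rfl) _

theorem eq_one_of_pow_prime_pow_eq_one_of_pow_eq_one {p N m : ℕ} (hp : p.Prime) {g : G}
    (hN : g ^ p ^ N = 1) (hm : g ^ m = 1) (hpm : ¬ p ∣ m) : g = 1 := by
  have hgcd : (p ^ N).gcd m = 1 := (hp.coprime_iff_not_dvd.2 hpm).pow_left N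
  simpa [hgcd] using pow_gcd_eq_one.2 ⟨hN, hm⟩

instance MulAut.normal_range_conj : (MulAut.conj (G := G)).range.Normal where
  conj_mem := by
    rintro _ ⟨q, rfl⟩ f
    exact ⟨f q, MulEquiv.ext fun g => by simp [MulAut.mul_apply, MulAut.inv_def]⟩

end

section

open Subgroup

variable {Q : Type*} [Group Q]

theorem commute_of_mul_inv_mem_center {x a b : Q} (ha : a * x⁻¹ ∈ center Q)
    (hb : b * x⁻¹ ∈ center Q) : Commute a b := by
  rw [← inv_mul_cancel_right a x, ← inv_mul_cancel_right b x]
  exact .mul_left (.mul_right (mem_center_iff.1 hb _) (mem_center_iff.1 ha x).symm)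
    (.mul_right (mem_center_iff.1 hb x) (.refl x))

theorem mul_inv_pow_eq_one_of_mem_center {x a : Q} {n : ℕ} (ha : a * x⁻¹ ∈ center Q)
    (han : a ^ n = 1) (hxn : x ^ n = 1) : (a * x⁻¹) ^ n = 1 := by
  have hax : Commute a x := commute_of_mul_inv_mem_center ha (by simp [one_mem])
  rw [hax.inv_right.mul_pow, han, inv_pow, hxn, one_mul, inv_one]

theorem MulAut.mul_apply_mul_inv (f g : MulAut Q) (x : Q) :
    (f * g) x * x⁻¹ = f (g x * x⁻¹) * (f x * x⁻¹) := by
  simp [MulAut.mul_apply]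

def stabilizerModCenter (x : Q) : Subgroup (MulAut Q) where
  carrier := {f | f x * x⁻¹ ∈ center Q}
  one_mem' := by simp [one_mem]
  mul_mem' {f g} hf hg := by
    show (f * g) x * x⁻¹ ∈ center Q
    rw [MulAut.mul_apply_mul_inv]
    exact mul_mem (MulEquivClass.apply_mem_center f hg) hf
  inv_mem' {f} hf := by
    have h : f⁻¹ x * x⁻¹ = f⁻¹ (f x * x⁻¹)⁻¹ := by
      simp [MulAut.inv_def]
    show f⁻¹ x * x⁻¹ ∈ center Q
    rw [h]
    exact MulEquivClass.apply_mem_center _ (inv_mem (show f x * x⁻¹ ∈ center Q from hf))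

theorem apply_eq_of_not_dvd_card_center {p N : ℕ} (hp : p.Prime) [Finite Q] {x : Q}
    (hxN : x ^ p ^ N = 1) (hZ : ¬ p ∣ Nat.card (center Q)) {f : MulAut Q}
    (hf : f ∈ stabilizerModCenter x) : f x = x := by
  have hpow : (⟨f x * x⁻¹, hf⟩ : center Q) ^ p ^ N = 1 :=
    Subtype.ext <| (SubmonoidClass.coe_pow _ _).trans <|
      mul_inv_pow_eq_one_of_mem_center hf (by rw [← map_pow, hxN, map_one]) hxN
  exact mul_inv_eq_one.1 (congrArg Subtype.val
    (eq_one_of_pow_prime_pow_eq_one_of_pow_eq_one hp hpow pow_card_eq_one' hZ))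

theorem Sylow.conj_apply_eq_of_mem_stabilizerModCenter {p N : ℕ} [Fact p.Prime] [Finite Q]
    (P : Sylow p Q) {x : Q} (hxN : x ^ p ^ N = 1) (hx : ∀ w ∈ (P : Subgroup Q), Commute x w)
    {q : Q} (hq : MulAut.conj q ∈ stabilizerModCenter x) : MulAut.conj q x = x := by
  let C := (stabilizerModCenter x).comap MulAut.conj
  let φ : C →* center Q :=
    { toFun a := ⟨MulAut.conj (a : Q) x * x⁻¹, a.2⟩
      map_one' := by ext; simp
      map_mul' a b := by
        have hb : MulAut.conj (b : Q) x * x⁻¹ ∈ center Q := b.2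
        ext
        show MulAut.conj ((a : Q) * b) x * x⁻¹ = MulAut.conj (a : Q) x * x⁻¹ * _
        rw [map_mul, MulAut.mul_apply_mul_inv, MulAut.conj_apply (a : Q),
          mem_center_iff.1 hb, mul_inv_cancel_right]
        exact (mem_center_iff.1 hb _).symm }
  have hPC : (P : Subgroup Q) ≤ C := fun w hw => by
    show MulAut.conj w x * x⁻¹ ∈ center Q
    simp [(hx w hw).symm.eq, one_mem]
  have hker : (P : Subgroup Q).subgroupOf C ≤ φ.ker := fun w hw => by
    ext
    simp [φ, (hx w hw).symm.eq]
  have hindex : ¬ p ∣ φ.ker.index := fun h => P.not_dvd_index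
    (h.trans ((index_dvd_of_le hker).trans (relIndex_dvd_index_of_le hPC)))
  have hpow_index : φ ⟨q, hq⟩ ^ φ.ker.index = 1 := by
    rw [← map_pow]
    exact pow_index_mem φ.ker _
  have hpow_prime : φ ⟨q, hq⟩ ^ p ^ N = 1 :=
    Subtype.ext <| (SubmonoidClass.coe_pow _ _).trans <|
      mul_inv_pow_eq_one_of_mem_center hq (by rw [← map_pow, hxN, map_one]) hxN
  exact mul_inv_eq_one.1 (congrArg Subtype.val
    (eq_one_of_pow_prime_pow_eq_one_of_pow_eq_one Fact.out hpow_prime hpow_index hindex))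

theorem exists_fixed_mul_inv_mem_center {p N : ℕ} (hp : p.Prime) [Finite Q] {x : Q}
    (hxN : x ^ p ^ N = 1) {A : Subgroup (MulAut Q)} (hA : A ≤ stabilizerModCenter x)
    (horbit : ¬ p ∣ (MulAction.orbit A x).ncard) :
    ∃ y : Q, y * x⁻¹ ∈ center Q ∧ y ^ p ^ N = 1 ∧ ∀ f ∈ A, f y = y := by
  set s := (MulAction.orbit A x).toFinite.toFinset
  have mem_s {a : Q} : a ∈ s ↔ ∃ f : A, (f : MulAut Q) x = a := by
    simp [s, MulAction.mem_orbit_iff, Subgroup.smul_def, MulAut.smul_def]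
  have hs_coset : ∀ a ∈ s, a * x⁻¹ ∈ center Q := fun a ha => by
    obtain ⟨f, rfl⟩ := mem_s.1 ha
    exact hA f.2
  have comm : (s : Set Q).Pairwise Commute := fun a ha b hb _ =>
    commute_of_mul_inv_mem_center (hs_coset a ha) (hs_coset b hb)
  set π := s.noncommProd id comm
  have hπ_fixed (f : MulAut Q) (hf : f ∈ A) : f π = π :=
    Finset.apply_noncommProd_id_of_mapsTo comm f fun a ha => by
      obtain ⟨g, rfl⟩ := mem_s.1 ha
      exact mem_s.2 ⟨⟨f, hf⟩ * g, rfl⟩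
  have hπ_pow : π ^ p ^ N = 1 := Finset.noncommProd_id_pow_eq_one comm fun a ha => by
    obtain ⟨g, rfl⟩ := mem_s.1 ha
    rw [← map_pow, hxN, map_one]
  have hπ_coset : (π : Q ⧸ center Q) = (x : Q ⧸ center Q) ^ s.card := by
    rw [← QuotientGroup.mk'_apply, Finset.map_noncommProd]
    exact Finset.noncommProd_eq_pow_card _ _ _ _ fun a ha =>
      QuotientGroup.eq_iff_div_mem.2 (div_eq_mul_inv a x ▸ hs_coset a ha)
  have hcard : s.card.Coprime (orderOf x) := by
    rw [show s.card = (MulAction.orbit A x).ncard from (Set.ncard_eq_toFinset_card _ _).symm]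
    exact ((hp.coprime_iff_not_dvd.2 horbit).pow_left N).symm.coprime_dvd_right
      (orderOf_dvd_of_pow_eq_one hxN)
  obtain ⟨m, hm⟩ := exists_pow_eq_self_of_coprime hcard
  refine ⟨π ^ m, ?_, by rw [← pow_mul, mul_comm, pow_mul, hπ_pow, one_pow],
    fun f hf => by rw [map_pow, hπ_fixed f hf]⟩
  rw [← div_eq_mul_inv, ← QuotientGroup.eq_iff_div_mem, QuotientGroup.mk_pow, hπ_coset,
    ← QuotientGroup.mk_pow, ← QuotientGroup.mk_pow, hm]

theorem not_dvd_ncard_orbit_stabilizerModCenter {p N : ℕ} [Fact p.Prime] [Finite Q]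
    (P : Sylow p Q) {x : Q} (hxN : x ^ p ^ N = 1) (hx : ∀ w ∈ (P : Subgroup Q), Commute x w)
    (hout : ¬ p ∣ (MulAut.conj (G := Q)).range.index) :
    ¬ p ∣ (MulAction.orbit (stabilizerModCenter x) x).ncard := by
  rw [← MulAction.index_stabilizer]
  have hle : (MulAut.conj (G := Q)).range.subgroupOf (stabilizerModCenter x) ≤
      MulAction.stabilizer _ x := by
    rintro ⟨_, hf⟩ ⟨q, rfl⟩
    exact P.conj_apply_eq_of_mem_stabilizerModCenter hxN hx hf
  exact fun h => hout (h.trans ((index_dvd_of_le hle).trans (relIndex_dvd_index_of_normal _ _)))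

end

theorem quasisimple_easy_case_general
    (p : ℕ) (hp : p.Prime)
    (Q : Type*) [Group Q] [Finite Q]
    (hcase : ¬ p ∣ Nat.card (Subgroup.center Q) ∨
      ¬ p ∣ (MulAut.conj (G := Q)).range.index)
    (P : Sylow p Q) (x : Q) (hxP : x ∈ (P : Subgroup Q))
    (hxZ : ∀ w ∈ (P : Subgroup Q), x * w = w * x) :
    ∃ y : Q, y * x⁻¹ ∈ Subgroup.center Q ∧ (∃ n : ℕ, orderOf y = p ^ n) ∧
      ∀ f : MulAut Q, f x * x⁻¹ ∈ Subgroup.center Q → f y = y := by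
  have : Fact p.Prime := ⟨hp⟩
  obtain ⟨N, hxN⟩ : ∃ N, x ^ p ^ N = 1 :=
    (P.2 ⟨x, hxP⟩).imp fun _ h => by simpa using congrArg Subtype.val h
  have horderOf {y : Q} (hy : y ^ p ^ N = 1) : ∃ n, orderOf y = p ^ n :=
    ((Nat.dvd_prime_pow hp).1 (orderOf_dvd_of_pow_eq_one hy)).imp fun _ => And.right
  rcases hcase with hZ | hout
  · exact ⟨x, by simp [one_mem], horderOf hxN,
      fun f hf => apply_eq_of_not_dvd_card_center hp hxN hZ hf⟩
  · obtain ⟨y, hyx, hyN, hfixed⟩ := exists_fixed_mul_inv_mem_center hp hxN le_rfl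
      (not_dvd_ncard_orbit_stabilizerModCenter P hxN hxZ hout)
    exact ⟨y, hyx, horderOf hyN, hfixed⟩

/-- For an odd prime `p` and a finite quasisimple group `Q` with center `Z`, if `p` does
not divide `|Z|` or `p` does not divide `|Out(Q)|`, then for any `x ∈ Z(P)` with `P` a
Sylow `p`-subgroup there exists a `p`-element `y ∈ xZ` fixed by every automorphism `f` of
`Q` with `[f, x] ≤ Z`. -/
theorem quasisimple_easy_case
    (p : ℕ) (hp : p.Prime) (hodd : Odd p)
    (Q : Type*) [Group Q] [Finite Q]
    (hperf : commutator Q = ⊤)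
    (hsimple : IsSimpleGroup (Q ⧸ Subgroup.center Q))
    (hcase : ¬ p ∣ Nat.card (Subgroup.center Q) ∨
      ¬ p ∣ (MulAut.conj (G := Q)).range.index)
    (P : Sylow p Q) (x : Q) (hxP : x ∈ (P : Subgroup Q))
    (hxZ : ∀ w ∈ (P : Subgroup Q), x * w = w * x) :
    ∃ y : Q, y * x⁻¹ ∈ Subgroup.center Q ∧ (∃ n : ℕ, orderOf y = p ^ n) ∧
      ∀ f : MulAut Q, f x * x⁻¹ ∈ Subgroup.center Q → f y = y :=
  quasisimple_easy_case_general p hp Q hcase P x hxP hxZ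
end

section
/- Let p be an odd prime, c and d positive integers, and e a natural number with e ≡ 1 (mod p). Let M be the group of functions from Fin d to ZMod(p^c) under pointwise addition, on which the symmetric group of permutations of Fin d acts by permuting coordinates. Let Z ⊆ M denote the set of constant functions, let M₀ = {x ∈ M : the sum of the coordinates of x is 0}, and let Z₀ = Z ∩ M₀. Fix a Sylow p-subgroup Q of the permutation group of Fin d, and let M₁ = {x ∈ M₀ : for every τ ∈ Q, the function x ∘ τ − x lies in Z₀}. Then {x ∈ M₁ : e • x − x ∈ Z₀} = {z + y : z ∈ Z₀, y ∈ M₁, e • y = y}, where e • x denotes scalar multiplication of x by e. -/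
/-!
Write `d = p ^ m * k` with `p ∤ k`. The permutation cycling each of `k` blocks of size `p ^ m`
is a `p`-element, so a conjugate of it lies in `Q`; relabelling the blocks, we may assume it lies
in `Q`. For `x ∈ M₁` it shifts `x` by a constant `c`, so on each block `x` is an arithmetic
progression with difference `c`. Summing, `2 ∑ x = p ^ m (2 S + k (p ^ m - 1) c)` where `S` is the
sum of the first entries of the blocks, so `b = S / k + (p ^ m - 1) c / 2` (`p` is odd) satisfies
`d b = ∑ x = 0`. If `(e - 1) x` is constant then `(e - 1) c = 0` and `(e - 1) b = (e - 1) x i`, so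
`x = b + (x - b)` is the required decomposition. The reverse inclusion is direct.
-/

open Finset Equiv

theorem Sylow.exists_equiv_permCongr_mem {p : ℕ} [Fact p.Prime] {α β : Type*} [Finite α]
    (Q : Sylow p (Perm α)) (E : β ≃ α) {σ : Perm β} {m : ℕ} (hσ : σ ^ p ^ m = 1) :
    ∃ F : β ≃ α, F.permCongr σ ∈ Q := by
  have hE : E.permCongr σ ^ p ^ m = 1 := by rw [← E.permCongrHom_coe, ← map_pow, hσ, map_one]
  have hpgroup : IsPGroup p (Subgroup.zpowers (E.permCongr σ)) := by
    rintro ⟨_, n, rfl⟩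
    refine ⟨m, Subtype.ext ?_⟩
    rw [Subgroup.coe_pow, ← zpow_natCast, ← zpow_mul, mul_comm, zpow_mul, zpow_natCast, hE,
      one_zpow, Subgroup.coe_one]
  obtain ⟨Q', hQ'⟩ := hpgroup.exists_le_sylow
  obtain ⟨g, rfl⟩ := MulAction.exists_smul_eq (Perm α) Q' Q
  refine ⟨E.trans g, ?_⟩
  have hconj := Subgroup.smul_mem_pointwise_smul _ (MulAut.conj g) (Q' : Subgroup (Perm α))
    (hQ' (Subgroup.mem_zpowers _))
  rw [MulAut.smul_def, MulAut.conj_apply, ← permCongr_eq_mul] at hconj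
  exact hconj

theorem apply_perm_pow_eq_add_nsmul {α M : Type*} [AddMonoid M] {σ : Perm α} {y : α → M}
    {c : M} (hy : ∀ a, y (σ a) = y a + c) (n : ℕ) (a : α) :
    y ((σ ^ n) a) = y a + n • c := by
  induction n with
  | zero => simp
  | succ n ih => rw [pow_succ', Perm.mul_apply, hy, ih, succ_nsmul, add_assoc]

theorem two_mul_sum_fin_add_val_mul {R : Type*} [CommRing R] (N : ℕ) (a c : R) :
    2 * ∑ j : Fin N, (a + (j : ℕ) * c) = N * (2 * a + (N - 1) * c) := by
  have hgauss : (((∑ j ∈ range N, j) * 2 : ℕ) : R) = ((N * (N - 1) : ℕ) : R) :=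
    congrArg Nat.cast (sum_range_id_mul_two N)
  rcases N with _ | N
  · simp
  push_cast at hgauss
  rw [sum_add_distrib, ← sum_mul, Fin.sum_univ_eq_sum_range (fun j => (j : R)), sum_const,
    card_univ, Fintype.card_fin, nsmul_eq_mul]
  push_cast
  linear_combination c * hgauss

def blockShift (k N : ℕ) [NeZero N] : Perm (Fin k × Fin N) :=
  prodCongr (Equiv.refl _) (Equiv.addRight 1)

section blockShift

open Fin.NatCast

variable {k N : ℕ} [NeZero N]

theorem blockShift_pow_apply (n : ℕ) (w : Fin k × Fin N) :
    (blockShift k N ^ n) w = (w.1, w.2 + n) := by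
  induction n with
  | zero => simp
  | succ n ih => rw [pow_succ', Perm.mul_apply, ih]; simp [blockShift, add_assoc]

theorem blockShift_pow_self : blockShift k N ^ N = 1 := by
  ext1 w
  simp [blockShift_pow_apply]

variable {R : Type*} [CommRing R] {y : Fin k × Fin N → R} {c : R}

theorem two_mul_sum_eq_of_apply_blockShift (hy : ∀ w, y (blockShift k N w) = y w + c) :
    2 * ∑ w, y w = N * (2 * ∑ i, y (i, 0) + k * (N - 1) * c) := by
  have hprog (i : Fin k) (j : Fin N) : y (i, j) = y (i, 0) + ((j : ℕ) : R) * c := by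
    have := apply_perm_pow_eq_add_nsmul hy j (i, 0)
    rwa [blockShift_pow_apply, zero_add, Fin.cast_val_eq_self, nsmul_eq_mul] at this
  calc 2 * ∑ w, y w = ∑ i : Fin k, 2 * ∑ j : Fin N, (y (i, 0) + ((j : ℕ) : R) * c) := by
        rw [Fintype.sum_prod_type, mul_sum]
        simp only [← hprog]
    _ = ∑ i : Fin k, N * (2 * y (i, 0) + (N - 1) * c) := by
        simp only [two_mul_sum_fin_add_val_mul]
    _ = N * (2 * ∑ i, y (i, 0) + k * (N - 1) * c) := by
        rw [← mul_sum, sum_add_distrib, ← mul_sum, sum_const, card_univ, Fintype.card_fin,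
          nsmul_eq_mul]
        ring

theorem exists_mul_eq_sum_of_apply_blockShift [Invertible (k : R)] [Invertible (2 : R)]
    (hy : ∀ w, y (blockShift k N w) = y w + c) :
    ∃ b : R, (k * N : R) * b = ∑ w, y w ∧
      ∀ f : R, (∀ w w', f * y w = f * y w') → ∀ w, f * b = f * y w := by
  refine ⟨⅟(k : R) * ∑ i, y (i, 0) + ⅟2 * (N - 1) * c, ?_, fun f hf w => ?_⟩
  · linear_combination (-⅟2 : R) * two_mul_sum_eq_of_apply_blockShift hy
      + (N * ∑ i, y (i, 0)) * mul_invOf_self (k : R)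
      + (∑ w, y w - N * ∑ i, y (i, 0)) * invOf_mul_self (2 : R)
  · have hfc : f * c = 0 := by
      have := hf (blockShift k N w) w
      rw [hy, mul_add] at this
      simpa using this
    have hfS : f * ∑ i, y (i, 0) = k * (f * y w) := by
      rw [mul_sum, sum_congr rfl fun i _ => hf (i, 0) w, sum_const, card_univ, Fintype.card_fin,
        nsmul_eq_mul]
    linear_combination ⅟(k : R) * hfS + ⅟2 * (N - 1) * hfc + (f * y w) * invOf_mul_self (k : R)

end blockShift

theorem exists_card_mul_eq_sum_of_sylow {p : ℕ} [Fact p.Prime] {α R : Type*} [Fintype α]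
    [Nonempty α] [CommRing R] [Invertible (2 : R)]
    [Invertible ((ordCompl[p] (Fintype.card α) : ℕ) : R)] (Q : Sylow p (Perm α)) (x : α → R)
    (hx : ∀ τ ∈ (Q : Subgroup (Perm α)), ∀ a a', x (τ a) - x a = x (τ a') - x a') :
    ∃ b : R, (Fintype.card α : R) * b = ∑ a, x a ∧
      ∀ f : R, (∀ a a', f * x a = f * x a') → ∀ a, f * b = f * x a := by
  set N := ordProj[p] (Fintype.card α)
  set k := ordCompl[p] (Fintype.card α)
  have : NeZero N := ⟨pow_ne_zero _ (Fact.out : p.Prime).ne_zero⟩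
  have hkN : k * N = Fintype.card α := by rw [mul_comm, Nat.ordProj_mul_ordCompl_eq_self]
  obtain ⟨F, hF⟩ := Q.exists_equiv_permCongr_mem
    (Fintype.equivOfCardEq (by simpa using hkN)) blockShift_pow_self
  obtain ⟨a₀⟩ := ‹Nonempty α›
  set σ := F.permCongr (blockShift k N)
  have hy (w : Fin k × Fin N) : x (F (blockShift k N w)) = x (F w) + (x (σ a₀) - x a₀) := by
    have := hx σ hF (F w) a₀
    simp only [σ, permCongr_apply, symm_apply_apply] at this ⊢
    linear_combination this
  obtain ⟨b, hb, hfb⟩ := exists_mul_eq_sum_of_apply_blockShift (y := x ∘ F) hy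
  refine ⟨b, ?_, fun f hf a => ?_⟩
  · rw [← hkN, Nat.cast_mul, ← Equiv.sum_comp F x]
    exact hb
  · simpa using hfb f (fun w w' => hf _ _) (F.symm a)

theorem add_comp_sub_add_of_forall_eq {α R : Type*} [AddCommGroup R] {z : α → R}
    (hz : ∀ i j, z i = z j) (y : α → R) (τ : α → α) :
    (z + y) ∘ τ - (z + y) = y ∘ τ - y := by
  ext i
  simp [hz (τ i) i]

theorem nsmul_sub_self_apply {α R : Type*} [Ring R] (e : ℕ) (x : α → R) (i : α) :
    (e • x - x) i = ((e : R) - 1) * x i := by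
  rw [Pi.sub_apply, Pi.smul_apply, nsmul_eq_mul, sub_one_mul]

theorem sum_nsmul_sub_self {α R : Type*} [Fintype α] [Ring R] (e : ℕ) (x : α → R) :
    ∑ i, (e • x - x) i = ((e : R) - 1) * ∑ i, x i := by
  simp only [nsmul_sub_self_apply, mul_sum]

theorem nsmul_sub_const_eq_self {α R : Type*} [Ring R] {e : ℕ} {x : α → R} {b : R}
    (h : ∀ i, ((e : R) - 1) * b = ((e : R) - 1) * x i) :
    e • (x - fun _ => b) = x - fun _ => b := by
  funext i
  rw [← sub_eq_zero, ← Pi.sub_apply, nsmul_sub_self_apply, Pi.sub_apply, mul_sub, h, sub_self]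

theorem wreath_lemma_general
    (p : ℕ) (hp : p.Prime) (hodd : Odd p)
    (c d : ℕ) (hd : 0 < d)
    (e : ℕ)
    (Q : Sylow p (Equiv.Perm (Fin d))) :
    let M := Fin d → ZMod (p ^ c)
    let Z : Set M := {x | ∀ i j : Fin d, x i = x j}
    let M₀ : Set M := {x | ∑ i, x i = 0}
    let Z₀ : Set M := Z ∩ M₀
    let M₁ : Set M := {x | x ∈ M₀ ∧
      ∀ τ ∈ (Q : Subgroup (Equiv.Perm (Fin d))), (x ∘ τ) - x ∈ Z₀}
    {x | x ∈ M₁ ∧ e • x - x ∈ Z₀} =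
      {w | ∃ z ∈ Z₀, ∃ y ∈ M₁, e • y = y ∧ w = z + y} := by
  intro M Z M₀ Z₀ M₁
  have : Fact p.Prime := ⟨hp⟩
  have : Nonempty (Fin d) := ⟨⟨0, hd⟩⟩
  let : Invertible (2 : ZMod (p ^ c)) :=
    invertibleOfCoprime ((Nat.coprime_two_left.2 hodd).pow_right c)
  let : Invertible ((ordCompl[p] (Fintype.card (Fin d)) : ℕ) : ZMod (p ^ c)) :=
    invertibleOfCoprime ((Nat.coprime_ordCompl hp (by simpa using hd.ne')).symm.pow_right c)
  have hM₁ (z y : M) (hz : z ∈ Z₀) : z + y ∈ M₁ ↔ y ∈ M₁ := by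
    refine and_congr ?_ (forall₂_congr fun τ _ => by rw [add_comp_sub_add_of_forall_eq hz.1])
    show ∑ i, (z i + y i) = 0 ↔ ∑ i, y i = 0
    rw [sum_add_distrib, (hz.2 : ∑ i, z i = 0), zero_add]
  ext x
  constructor
  · rintro ⟨hx, hfx, -⟩
    obtain ⟨b, hdb, hb⟩ := exists_card_mul_eq_sum_of_sylow Q x fun τ hτ => (hx.2 τ hτ).1
    have hz : (fun _ => b : M) ∈ Z₀ := by
      refine ⟨fun _ _ => rfl, ?_⟩
      show ∑ _i : Fin d, b = 0
      rw [sum_const, card_univ, nsmul_eq_mul, hdb]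
      exact hx.1
    refine ⟨_, hz, x - fun _ => b, (hM₁ _ _ hz).1 (by simpa using hx), ?_, by simp⟩
    exact nsmul_sub_const_eq_self
      (hb _ fun i j => by rw [← nsmul_sub_self_apply, ← nsmul_sub_self_apply]; exact hfx i j)
  · rintro ⟨z, hz, y, hy, hye, rfl⟩
    refine ⟨(hM₁ z y hz).2 hy, ?_⟩
    rw [smul_add, hye, add_sub_add_right_eq_sub]
    refine ⟨fun i j => by rw [nsmul_sub_self_apply, nsmul_sub_self_apply, hz.1 i j], ?_⟩
    show ∑ i, (e • z - z) i = 0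
    rw [sum_nsmul_sub_self, (hz.2 : ∑ i, z i = 0), mul_zero]

/-- The wreath-product lemma: in `M = (ZMod (p^c))^d` with the symmetric group permuting
coordinates and `σ` acting as multiplication by `e ≡ 1 (mod p)`, with `Z` the constant
vectors, `M₀` the augmentation kernel, `Z₀ = Z ∩ M₀`, `Q` a Sylow `p`-subgroup of the
symmetric group, and `M₁ = {x ∈ M₀ | [x, Q] ≤ Z₀}`, we have
`{x ∈ M₁ | [x, σ] ∈ Z₀} = Z₀ + C_{M₁}(σ)`. -/
theorem wreath_lemma
    (p : ℕ) (hp : p.Prime) (hodd : Odd p)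
    (c d : ℕ) (hc : 0 < c) (hd : 0 < d)
    (e : ℕ) (he : e ≡ 1 [MOD p])
    (Q : Sylow p (Equiv.Perm (Fin d))) :
    let M := Fin d → ZMod (p ^ c)
    let Z : Set M := {x | ∀ i j : Fin d, x i = x j}
    let M₀ : Set M := {x | ∑ i, x i = 0}
    let Z₀ : Set M := Z ∩ M₀
    let M₁ : Set M := {x | x ∈ M₀ ∧
      ∀ τ ∈ (Q : Subgroup (Equiv.Perm (Fin d))), (x ∘ τ) - x ∈ Z₀}
    {x | x ∈ M₁ ∧ e • x - x ∈ Z₀} =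
      {w | ∃ z ∈ Z₀, ∃ y ∈ M₁, e • y = y ∧ w = z + y} :=
  wreath_lemma_general p hp hodd c d hd e Q
end

section
/- Let p be a prime, Q a finite group, and Z a subgroup of the center of Q whose order is coprime to p. Let x ∈ Q be an element whose order is a power of p. Then every automorphism f of Q satisfying f(x) * x⁻¹ ∈ Z fixes x, i.e., f(x) = x. -/
/-- If `Z` is a central subgroup of order coprime to `p` in a finite group `Q` and `x`
is a `p`-element of `Q`, then any automorphism `f` of `Q` with `f(x)x⁻¹ ∈ Z` fixes `x`. -/
theorem automorphism_fixes_p_element_mod_coprime_center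
    (p : ℕ) (hp : p.Prime)
    (Q : Type*) [Group Q] [Finite Q]
    (Z : Subgroup Q) (hZc : Z ≤ Subgroup.center Q)
    (hZcop : Nat.Coprime (Nat.card Z) p)
    (x : Q) (hx : ∃ n : ℕ, orderOf x = p ^ n) :
    ∀ f : MulAut Q, f x * x⁻¹ ∈ Z → f x = x := by
  intro f hf
  obtain ⟨n, hn⟩ := hx
  set z := f x * x⁻¹ with hz
  have hzx : f x = z * x := by rw [hz, inv_mul_cancel_right]
  have hcomm : Commute z x := (Subgroup.mem_center_iff.mp (hZc hf) x).symm
  have hdvd : orderOf z ∣ Nat.card Z := by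
    have : orderOf (⟨z, hf⟩ : Z) ∣ Nat.card Z := orderOf_dvd_natCard _
    simpa using this
  have hcop : Nat.Coprime (orderOf z) (orderOf x) := by
    rw [hn]
    exact (Nat.Coprime.coprime_dvd_left hdvd hZcop).pow_right n
  have hord : orderOf (f x) = orderOf x := orderOf_injective f.toMonoidHom f.injective x
  rw [hzx, hcomm.orderOf_mul_eq_mul_orderOf_of_coprime hcop] at hord
  have hx1 : orderOf x ≠ 0 := (orderOf_pos x).ne'
  have : orderOf z = 1 := by
    nlinarith [orderOf_pos x, Nat.one_le_iff_ne_zero.mpr hx1]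
  rw [orderOf_eq_one_iff] at this
  rw [hzx, this, one_mul]
end
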